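/- arXiv:2207.06053 — 2 statements merged into one kernel-verified Lean document; each statement's English description precedes it below -/
import Mathlib

section
/- Let f1, f2 be measurable functions on R^d with f1 in the weak Lebesgue space L^{p1,q1} and f2 in L^{p2,q2}, where 1 ≤ p1, p2 < ∞, 1 ≤ q1, q2 ≤ ∞, 1/p = 1/p1 + 1/p2 with p < ∞, and 1/q = 1/q1 + 1/q2. Then the product f1·f2 belongs to the Lorentz space L^{p,q} and ‖f1 f2‖_{L^{p,q}} ≤ C ‖f1‖_{L^{p1,q1}} ‖f2‖_{L^{p2,q2}} for a constant C depending only on the exponents. -/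
noncomputable section
open MeasureTheory
open scoped ENNReal

/-- The distribution function `λ({|f| > t})`. -/
def distFun {d : ℕ} (f : EuclideanSpace ℝ (Fin d) → ℂ) (t : ℝ) : ℝ≥0∞ :=
  volume {x | t < ‖f x‖}

/-- The Lorentz quasi-norm `‖f‖_{L^{p,q}}`: for `q = ∞` the weak-`L^p` quasi-norm
`sup_{t>0} t · λ({|f|>t})^{1/p}`, and for `q < ∞` the quantity
`p^{1/q} ‖ t · λ({|f|>t})^{1/p} ‖_{L^q((0,∞), dt/t)}`. -/
def lorentzNorm {d : ℕ} (p : ℝ) (q : ℝ≥0∞) (f : EuclideanSpace ℝ (Fin d) → ℂ) : ℝ≥0∞ :=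
  if q = ∞ then ⨆ (t : ℝ) (_ : 0 < t), ENNReal.ofReal t * distFun f t ^ (1 / p)
  else ENNReal.ofReal p ^ (1 / q.toReal) *
    (∫⁻ t in Set.Ioi (0 : ℝ),
        (ENNReal.ofReal t * distFun f t ^ (1 / p)) ^ q.toReal / ENNReal.ofReal t) ^
      (1 / q.toReal)

open Set Function
open scoped NNReal

namespace LorentzAux

variable {d : ℕ} {f f1 f2 : EuclideanSpace ℝ (Fin d) → ℂ}

theorem distFun_anti : Antitone (distFun f) := fun _ _ hst =>
  measure_mono fun _ hx => lt_of_le_of_lt hst hx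

theorem distFun_right {s : ℝ} {c : ℝ≥0∞} (h : ∀ s' > s, distFun f s' ≤ c) :
    distFun f s ≤ c := by
  have hU : {x | s < ‖f x‖} = ⋃ n : ℕ, {x | s + ((n:ℝ) + 1)⁻¹ < ‖f x‖} := by
    ext x
    simp only [mem_setOf_eq, mem_iUnion]
    constructor
    · intro hx
      obtain ⟨n, hn⟩ := exists_nat_one_div_lt (sub_pos.2 hx)
      rw [one_div] at hn
      exact ⟨n, by linarith⟩
    · rintro ⟨n, hn⟩
      have : (0:ℝ) < ((n:ℝ) + 1)⁻¹ := by positivity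
      linarith
  have hmono : Monotone (fun n : ℕ => {x : EuclideanSpace ℝ (Fin d) | s + ((n:ℝ) + 1)⁻¹ < ‖f x‖}) := by
    intro m n hmn x hx
    simp only [mem_setOf_eq] at hx ⊢
    have : ((n:ℝ) + 1)⁻¹ ≤ ((m:ℝ) + 1)⁻¹ := by
      apply inv_anti₀ (by positivity)
      exact_mod_cast add_le_add_left (Nat.cast_le.2 hmn) 1
    linarith
  calc distFun f s = volume (⋃ n : ℕ, {x | s + ((n:ℝ) + 1)⁻¹ < ‖f x‖}) := by
        rw [distFun, hU]
    _ = ⨆ n : ℕ, volume {x | s + ((n:ℝ) + 1)⁻¹ < ‖f x‖} :=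
        (hmono.directed_le).measure_iUnion
    _ ≤ c := by
        refine iSup_le fun n => h _ ?_
        have : (0:ℝ) < ((n:ℝ) + 1)⁻¹ := by positivity
        linarith

def rearr {d : ℕ} (f : EuclideanSpace ℝ (Fin d) → ℂ) (t : ℝ) : ℝ≥0∞ :=
  ⨅ (s : ℝ≥0) (_ : distFun f (s : ℝ) ≤ ENNReal.ofReal t), (s : ℝ≥0∞)

theorem rearr_anti : Antitone (rearr f) := by
  intro t t' htt'
  simp only [rearr]
  refine le_iInf fun s => le_iInf fun hs => ?_
  refine iInf_le_of_le s (iInf_le_of_le (le_trans hs (ENNReal.ofReal_le_ofReal htt')) le_rfl)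

theorem rearr_le {s t : ℝ} (hs : 0 ≤ s) (h : distFun f s ≤ ENNReal.ofReal t) :
    rearr f t ≤ ENNReal.ofReal s := by
  have h' : distFun f (s.toNNReal : ℝ) ≤ ENNReal.ofReal t := by
    rwa [Real.coe_toNNReal s hs]
  rw [rearr]
  simpa [ENNReal.ofReal] using iInf₂_le s.toNNReal h'

theorem lt_rearr_iff {s t : ℝ} (hs : 0 ≤ s) :
    ENNReal.ofReal s < rearr f t ↔ ENNReal.ofReal t < distFun f s := by
  constructor
  · intro h
    by_contra hc
    push_neg at hc
    exact absurd (rearr_le hs hc) (not_le.2 h)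
  · intro h
    by_contra hc
    push_neg at hc
    have key : ∀ ε : ℝ, 0 < ε → distFun f (s + ε) ≤ ENNReal.ofReal t := by
      intro ε hε
      have h1 : rearr f t < ENNReal.ofReal (s + ε) := by
        refine lt_of_le_of_lt hc ?_
        rw [ENNReal.ofReal_lt_ofReal_iff (by linarith)]
        linarith
      rw [rearr, iInf_lt_iff] at h1
      obtain ⟨s', hs'⟩ := h1
      rw [iInf_lt_iff] at hs'
      obtain ⟨hadm, hlt⟩ := hs'
      have hs'lt : (s' : ℝ) < s + ε := by
        rw [← ENNReal.ofReal_coe_nnreal, ENNReal.ofReal_lt_ofReal_iff (by linarith)] at hlt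
        exact hlt
      exact le_trans (distFun_anti hs'lt.le) hadm
    have : distFun f s ≤ ENNReal.ofReal t :=
      distFun_right fun s' hs' => by
        have := key (s' - s) (by linarith)
        simpa using this
    exact absurd h (not_lt.2 this)

theorem rearr_measurable : Measurable (rearr f) := (rearr_anti).measurable

theorem distFun_measurable : Measurable (distFun f) := (distFun_anti).measurable


theorem distFun_mul_le {s1 s2 : ℝ} (hs1 : 0 ≤ s1) (hs2 : 0 ≤ s2) :
    distFun (fun x => f1 x * f2 x) (s1 * s2) ≤ distFun f1 s1 + distFun f2 s2 := by
  refine le_trans (measure_mono ?_) (measure_union_le _ _)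
  intro x hx
  simp only [distFun, mem_setOf_eq, mem_union] at hx ⊢
  by_contra hc
  push_neg at hc
  rw [norm_mul] at hx
  exact absurd hx (not_lt.2 (mul_le_mul hc.1 hc.2 (norm_nonneg _) hs1))

theorem distFun_mul_le_right {s : ℝ} (hs : 0 ≤ s) :
    distFun (fun x => f1 x * f2 x) s ≤ distFun f2 0 := by
  refine measure_mono fun x hx => ?_
  simp only [mem_setOf_eq] at hx ⊢
  rw [norm_mul] at hx
  by_contra hc
  push_neg at hc
  have h2 : ‖f2 x‖ = 0 := le_antisymm hc (norm_nonneg _)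
  rw [h2, mul_zero] at hx
  linarith

theorem distFun_mul_le_left {s : ℝ} (hs : 0 ≤ s) :
    distFun (fun x => f1 x * f2 x) s ≤ distFun f1 0 := by
  refine measure_mono fun x hx => ?_
  simp only [mem_setOf_eq] at hx ⊢
  rw [norm_mul] at hx
  by_contra hc
  push_neg at hc
  have h2 : ‖f1 x‖ = 0 := le_antisymm hc (norm_nonneg _)
  rw [h2, zero_mul] at hx
  linarith

/-- if `rearr f t = 0` then `distFun f 0 ≤ ofReal t`. -/
theorem distFun_zero_le_of_rearr_eq_zero {t : ℝ} (h : rearr f t = 0) :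
    distFun f 0 ≤ ENNReal.ofReal t := by
  refine distFun_right fun s' hs' => ?_
  have h1 : rearr f t < ENNReal.ofReal s' := by
    rw [h]; exact ENNReal.ofReal_pos.2 hs'
  rw [rearr, iInf_lt_iff] at h1
  obtain ⟨s'', hs''⟩ := h1
  rw [iInf_lt_iff] at hs''
  obtain ⟨hadm, hlt⟩ := hs''
  have : (s'' : ℝ) < s' := by
    rwa [← ENNReal.ofReal_coe_nnreal, ENNReal.ofReal_lt_ofReal_iff hs'] at hlt
  exact le_trans (distFun_anti this.le) hadm

/-- `rearr f t = 0` (LHS) helper: rearr of product is 0. -/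
theorem rearr_eq_zero_of_distFun_zero {g : EuclideanSpace ℝ (Fin d) → ℂ} {t : ℝ}
    (h : distFun g 0 ≤ ENNReal.ofReal t) : rearr g t = 0 := by
  refine le_antisymm ?_ zero_le
  have := rearr_le le_rfl h
  simpa using this

theorem rearr_mul_le {t1 t2 : ℝ} (ht1 : 0 ≤ t1) (ht2 : 0 ≤ t2) :
    rearr (fun x => f1 x * f2 x) (t1 + t2) ≤ rearr f1 t1 * rearr f2 t2 := by
  set r1 := rearr f1 t1 with hr1
  set r2 := rearr f2 t2 with hr2
  by_cases h1 : r1 = 0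
  · -- LHS = 0
    have hd : distFun f1 0 ≤ ENNReal.ofReal t1 := distFun_zero_le_of_rearr_eq_zero h1
    have : distFun (fun x => f1 x * f2 x) 0 ≤ ENNReal.ofReal (t1 + t2) :=
      le_trans (distFun_mul_le_left le_rfl)
        (le_trans hd (ENNReal.ofReal_le_ofReal (by linarith)))
    rw [rearr_eq_zero_of_distFun_zero this]
    exact zero_le
  by_cases h2 : r2 = 0
  · have hd : distFun f2 0 ≤ ENNReal.ofReal t2 := distFun_zero_le_of_rearr_eq_zero h2
    have : distFun (fun x => f1 x * f2 x) 0 ≤ ENNReal.ofReal (t1 + t2) :=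
      le_trans (distFun_mul_le_right le_rfl)
        (le_trans hd (ENNReal.ofReal_le_ofReal (by linarith)))
    rw [rearr_eq_zero_of_distFun_zero this]
    exact zero_le
  by_cases h1t : r1 = ∞
  · rw [h1t, ENNReal.top_mul h2]; exact le_top
  by_cases h2t : r2 = ∞
  · rw [h2t, ENNReal.mul_top h1]; exact le_top
  -- main case
  refine ENNReal.le_of_forall_pos_le_add fun ε hε hfin => ?_
  -- choose ε' with (ε' : ℝ≥0∞) * (r1 + r2 + 1) ≤ ε and 0 < ε' ≤ 1
  set B : ℝ≥0∞ := r1 + r2 + 1 with hB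
  have hB0 : B ≠ 0 := by simp [hB]
  have hBt : B ≠ ∞ := by
    simp only [hB]
    exact ENNReal.add_ne_top.2 ⟨ENNReal.add_ne_top.2 ⟨h1t, h2t⟩, ENNReal.one_ne_top⟩
  set ε' : ℝ≥0 := min (((ε : ℝ≥0∞) / B).toNNReal) 1 with hε'
  have hε'pos : 0 < ε' := by
    refine lt_min ?_ one_pos
    exact ENNReal.toNNReal_pos (ENNReal.div_pos (by exact_mod_cast hε.ne') hBt).ne'
      ((ENNReal.div_lt_top (by simp) hB0).ne)
  have hε'le : (ε' : ℝ≥0∞) * B ≤ ε := by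
    have h1' : (ε' : ℝ≥0∞) ≤ (ε : ℝ≥0∞) / B := by
      rw [← ENNReal.coe_toNNReal ((ENNReal.div_lt_top (by simp) hB0).ne)]
      exact ENNReal.coe_le_coe.2 (min_le_left _ _)
    calc (ε' : ℝ≥0∞) * B ≤ ((ε : ℝ≥0∞) / B) * B := mul_le_mul_left h1' B
      _ = ε := ENNReal.div_mul_cancel hB0 hBt
  -- get admissible s1, s2
  have hlt1 : r1 < r1 + ε' := ENNReal.lt_add_right h1t (by exact_mod_cast hε'pos.ne')
  have hlt2 : r2 < r2 + ε' := ENNReal.lt_add_right h2t (by exact_mod_cast hε'pos.ne')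
  rw [hr1, rearr, iInf_lt_iff] at hlt1
  obtain ⟨s1, hs1⟩ := hlt1
  rw [iInf_lt_iff] at hs1
  obtain ⟨hadm1, hslt1⟩ := hs1
  rw [hr2, rearr, iInf_lt_iff] at hlt2
  obtain ⟨s2, hs2⟩ := hlt2
  rw [iInf_lt_iff] at hs2
  obtain ⟨hadm2, hslt2⟩ := hs2
  have hadm : distFun (fun x => f1 x * f2 x) ((s1 : ℝ) * (s2 : ℝ)) ≤ ENNReal.ofReal (t1 + t2) := by
    refine le_trans (distFun_mul_le s1.coe_nonneg s2.coe_nonneg) ?_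
    rw [ENNReal.ofReal_add ht1 ht2]
    exact add_le_add hadm1 hadm2
  have hle : rearr (fun x => f1 x * f2 x) (t1 + t2) ≤ (s1 : ℝ≥0∞) * (s2 : ℝ≥0∞) := by
    have := rearr_le (by positivity) hadm
    rwa [ENNReal.ofReal_mul s1.coe_nonneg, ENNReal.ofReal_coe_nnreal,
      ENNReal.ofReal_coe_nnreal] at this
  refine le_trans hle ?_
  calc (s1 : ℝ≥0∞) * (s2 : ℝ≥0∞) ≤ (r1 + ε') * (r2 + ε') :=
        mul_le_mul' hslt1.le hslt2.le
    _ = r1 * r2 + (ε' * r2 + r1 * ε' + ε' * ε') := by ring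
    _ ≤ r1 * r2 + ε' * B := by
        rw [hB]
        refine add_le_add (le_refl _) ?_
        have hε'1 : (ε' : ℝ≥0∞) ≤ 1 := by exact_mod_cast min_le_right _ _
        calc (ε':ℝ≥0∞) * r2 + r1 * ε' + ε' * ε'
            ≤ ε' * r2 + r1 * ε' + ε' * 1 := by
              gcongr
            _ = ε' * (r1 + r2 + 1) := by ring
    _ ≤ r1 * r2 + ε := add_le_add (le_refl _) hε'le

theorem exists_rpow_big {a r : ℝ} (ha : 0 < a) : ∃ K : ℝ, 0 < K ∧ r ≤ K ^ a / a := by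
  set m := max r 0 with hm
  refine ⟨(a * m + 1) ^ (1/a), Real.rpow_pos_of_pos (by positivity) _, ?_⟩
  rw [← Real.rpow_mul (by positivity), one_div, inv_mul_cancel₀ ha.ne', Real.rpow_one]
  have h1 : (a * m + 1) / a = m + 1/a := by field_simp
  rw [h1]
  have : (0:ℝ) < 1/a := by positivity
  have : r ≤ m := le_max_left _ _
  linarith

theorem lint_rpow_Ioo {a c : ℝ} (ha : 0 < a) (hc : 0 ≤ c) :
    ∫⁻ t in Ioo (0:ℝ) c, ENNReal.ofReal (t ^ (a-1)) = ENNReal.ofReal (c ^ a / a) := by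
  have hint : IntervalIntegrable (fun t : ℝ => t ^ (a-1)) volume 0 c :=
    intervalIntegral.intervalIntegrable_rpow' (by linarith)
  have hio : IntegrableOn (fun t : ℝ => t ^ (a-1)) (Ioo 0 c) volume :=
    ((intervalIntegrable_iff_integrableOn_Ioc_of_le hc).mp hint).mono_set Ioo_subset_Ioc_self
  rw [← MeasureTheory.ofReal_integral_eq_lintegral_ofReal hio]
  · congr 1
    rw [← MeasureTheory.integral_Ioc_eq_integral_Ioo, ← intervalIntegral.integral_of_le hc,
      integral_rpow (Or.inl (by linarith))]
    rw [sub_add_cancel, Real.zero_rpow ha.ne', sub_zero]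
  · filter_upwards [ae_restrict_mem measurableSet_Ioo] with t ht
    exact Real.rpow_nonneg ht.1.le _

theorem inner_int {a : ℝ} (ha : 0 < a) (c : ℝ≥0∞) :
    ∫⁻ t in Ioi (0:ℝ), (if ENNReal.ofReal t < c then ENNReal.ofReal (t ^ (a-1)) else 0)
      = c ^ a / ENNReal.ofReal a := by
  by_cases hc : c = ∞
  · subst hc
    simp only [ENNReal.ofReal_lt_top, if_true]
    rw [ENNReal.top_rpow_of_pos ha, ENNReal.top_div_of_ne_top ENNReal.ofReal_ne_top]
    refine ENNReal.eq_top_of_forall_nnreal_le fun r => ?_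
    obtain ⟨K, hK, hrK⟩ := exists_rpow_big (r := (r:ℝ)) ha
    calc (r : ℝ≥0∞) = ENNReal.ofReal (r : ℝ) := ENNReal.ofReal_coe_nnreal.symm
      _ ≤ ENNReal.ofReal (K ^ a / a) := ENNReal.ofReal_le_ofReal hrK
      _ = ∫⁻ t in Ioo (0:ℝ) K, ENNReal.ofReal (t ^ (a-1)) := (lint_rpow_Ioo ha hK.le).symm
      _ ≤ ∫⁻ t in Ioi (0:ℝ), ENNReal.ofReal (t ^ (a-1)) :=
          lintegral_mono_set fun t ht => ht.1
  · calc ∫⁻ t in Ioi (0:ℝ), (if ENNReal.ofReal t < c then ENNReal.ofReal (t ^ (a-1)) else 0)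
        = ∫⁻ t in Ioi (0:ℝ),
            (Ioo (0:ℝ) c.toReal).indicator (fun t => ENNReal.ofReal (t ^ (a-1))) t := by
          refine lintegral_congr_ae ?_
          filter_upwards [ae_restrict_mem measurableSet_Ioi] with t ht
          by_cases h : t < c.toReal
          · rw [indicator_of_mem (mem_Ioo.2 ⟨ht, h⟩), if_pos]
            exact (ENNReal.ofReal_lt_iff_lt_toReal (le_of_lt ht) hc).2 h
          · rw [indicator_of_notMem (fun hmem => h hmem.2), if_neg]
            exact fun hlt => h ((ENNReal.ofReal_lt_iff_lt_toReal (le_of_lt ht) hc).1 hlt)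
      _ = ∫⁻ t in Ioo (0:ℝ) c.toReal, ENNReal.ofReal (t ^ (a-1)) := by
          rw [lintegral_indicator measurableSet_Ioo, Measure.restrict_restrict measurableSet_Ioo,
            inter_eq_left.2 (fun t ht => ht.1)]
      _ = ENNReal.ofReal (c.toReal ^ a / a) := lint_rpow_Ioo ha ENNReal.toReal_nonneg
      _ = c ^ a / ENNReal.ofReal a := by
          rw [ENNReal.ofReal_div_of_pos ha, ← ENNReal.ofReal_rpow_of_nonneg
            ENNReal.toReal_nonneg ha.le, ENNReal.ofReal_toReal hc]

theorem dist_rearr_integral {P Q : ℝ} (hP : 0 < P) (hQ : 0 < Q) :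
    ∫⁻ s in Ioi (0:ℝ), (ENNReal.ofReal s) ^ (Q-1) * distFun f s ^ (Q/P)
      = ENNReal.ofReal (1/P) *
        ∫⁻ t in Ioi (0:ℝ), (ENNReal.ofReal t) ^ (Q/P-1) * rearr f t ^ Q := by
  have hQP : (0:ℝ) < Q/P := by positivity
  set μ := volume.restrict (Ioi (0:ℝ)) with hμ
  set F : ℝ → ℝ → ℝ≥0∞ := fun s t =>
    if ENNReal.ofReal t < distFun f s then
      ENNReal.ofReal (s ^ (Q-1)) * ENNReal.ofReal (t ^ (Q/P-1)) else 0 with hF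
  have hFmeas : Measurable (fun z : ℝ × ℝ => F z.1 z.2) := by
    apply Measurable.ite
    · exact measurableSet_lt (ENNReal.measurable_ofReal.comp measurable_snd)
        (distFun_measurable.comp measurable_fst)
    · exact ((ENNReal.measurable_ofReal.comp (measurable_fst.pow_const _))).mul
        ((ENNReal.measurable_ofReal.comp (measurable_snd.pow_const _)))
    · exact measurable_const
  have hswap : ∫⁻ s, (∫⁻ t, F s t ∂μ) ∂μ = ∫⁻ t, (∫⁻ s, F s t ∂μ) ∂μ :=
    lintegral_lintegral_swap hFmeas.aemeasurable
  -- left side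
  have hL : ∫⁻ s in Ioi (0:ℝ), (ENNReal.ofReal s) ^ (Q-1) * distFun f s ^ (Q/P)
      = ENNReal.ofReal (Q/P) * ∫⁻ s, (∫⁻ t, F s t ∂μ) ∂μ := by
    rw [← lintegral_const_mul' _ _ ENNReal.ofReal_ne_top]
    refine lintegral_congr_ae ?_
    filter_upwards [ae_restrict_mem measurableSet_Ioi] with s hs
    have hinner : ∫⁻ t, F s t ∂μ
        = ENNReal.ofReal (s ^ (Q-1)) * (distFun f s ^ (Q/P) / ENNReal.ofReal (Q/P)) := by
      rw [hμ, ← inner_int hQP (distFun f s), ← lintegral_const_mul' _ _ ENNReal.ofReal_ne_top]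
      refine lintegral_congr fun t => ?_
      rw [hF]
      simp only [mul_ite, mul_zero]
    rw [hinner, ENNReal.ofReal_rpow_of_pos hs]
    rw [← mul_assoc, mul_comm (ENNReal.ofReal (Q/P)) (ENNReal.ofReal (s ^ (Q-1))), mul_assoc]
    congr 1
    rw [ENNReal.mul_div_cancel (ENNReal.ofReal_pos.2 hQP).ne' ENNReal.ofReal_ne_top]
  -- right side
  have hR : ∫⁻ t in Ioi (0:ℝ), (ENNReal.ofReal t) ^ (Q/P-1) * rearr f t ^ Q
      = ENNReal.ofReal Q * ∫⁻ t, (∫⁻ s, F s t ∂μ) ∂μ := by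
    rw [← lintegral_const_mul' _ _ ENNReal.ofReal_ne_top]
    refine lintegral_congr_ae ?_
    filter_upwards [ae_restrict_mem measurableSet_Ioi] with t ht
    have hinner : ∫⁻ s, F s t ∂μ
        = ENNReal.ofReal (t ^ (Q/P-1)) * (rearr f t ^ Q / ENNReal.ofReal Q) := by
      rw [hμ, ← inner_int hQ (rearr f t), ← lintegral_const_mul' _ _ ENNReal.ofReal_ne_top]
      refine lintegral_congr_ae ?_
      filter_upwards [ae_restrict_mem measurableSet_Ioi] with s hs
      rw [hF]
      simp only [mul_ite, mul_zero]
      exact if_congr (lt_rearr_iff (le_of_lt hs)).symm (mul_comm _ _) rfl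
    rw [hinner, ENNReal.ofReal_rpow_of_pos ht]
    rw [← mul_assoc, mul_comm (ENNReal.ofReal Q) (ENNReal.ofReal (t ^ (Q/P-1))), mul_assoc]
    congr 1
    rw [ENNReal.mul_div_cancel (ENNReal.ofReal_pos.2 hQ).ne' ENNReal.ofReal_ne_top]
  rw [hL, hR, hswap, ← mul_assoc, ← ENNReal.ofReal_mul (by positivity), one_div,
    inv_mul_eq_div]

theorem lorentz_pow {P : ℝ} (hP : 0 < P) {q : ℝ≥0∞} (hq0 : q ≠ 0) (hqt : q ≠ ∞) :
    lorentzNorm P q f ^ q.toReal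
      = ∫⁻ t in Ioi (0:ℝ), (ENNReal.ofReal t) ^ (q.toReal/P - 1) * rearr f t ^ q.toReal := by
  have hQ : 0 < q.toReal := ENNReal.toReal_pos hq0 hqt
  set Q := q.toReal with hQdef
  rw [lorentzNorm, if_neg hqt]
  have hstep : ∫⁻ t in Ioi (0:ℝ), (ENNReal.ofReal t * distFun f t ^ (1/P)) ^ Q / ENNReal.ofReal t
      = ∫⁻ s in Ioi (0:ℝ), (ENNReal.ofReal s) ^ (Q-1) * distFun f s ^ (Q/P) := by
    refine lintegral_congr_ae ?_
    filter_upwards [ae_restrict_mem measurableSet_Ioi] with t ht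
    have hx0 : ENNReal.ofReal t ≠ 0 := (ENNReal.ofReal_pos.2 ht).ne'
    have he : 1/P * Q = Q/P := by ring
    calc (ENNReal.ofReal t * distFun f t ^ (1/P)) ^ Q / ENNReal.ofReal t
        = ((ENNReal.ofReal t) ^ Q * distFun f t ^ (Q/P)) / ENNReal.ofReal t := by
          rw [ENNReal.mul_rpow_of_nonneg _ _ hQ.le, ← ENNReal.rpow_mul, he]
      _ = (ENNReal.ofReal t) ^ (Q-1) * distFun f t ^ (Q/P) := by
          rw [div_eq_mul_inv, mul_right_comm]
          congr 1
          rw [ENNReal.rpow_sub _ _ hx0 ENNReal.ofReal_ne_top, ENNReal.rpow_one,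
            div_eq_mul_inv]
  rw [hstep, dist_rearr_integral hP hQ, ENNReal.mul_rpow_of_nonneg _ _ hQ.le,
    ← ENNReal.rpow_mul, ← ENNReal.rpow_mul]
  have h1 : 1/Q * Q = 1 := by field_simp
  rw [h1, ENNReal.rpow_one, ENNReal.rpow_one, ← mul_assoc, ← ENNReal.ofReal_mul hP.le,
    mul_one_div_cancel hP.ne', ENNReal.ofReal_one, one_mul]

theorem biSup_ofReal (x : ℝ≥0∞) :
    ⨆ (s : ℝ) (_ : 0 < s) (_ : ENNReal.ofReal s < x), ENNReal.ofReal s = x := by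
  apply le_antisymm
  · exact iSup_le fun s => iSup_le fun _ => iSup_le fun h => h.le
  · refine le_of_forall_lt fun c hc => ?_
    obtain ⟨z, hcz, hzx⟩ := exists_between hc
    have hzt : z ≠ ∞ := hzx.ne_top
    have hz0 : z ≠ 0 := by
      intro h; rw [h] at hcz; exact absurd hcz (not_lt.2 zero_le)
    set s := z.toReal with hs
    have hs0 : 0 < s := ENNReal.toReal_pos hz0 hzt
    have hzs : ENNReal.ofReal s = z := ENNReal.ofReal_toReal hzt
    refine lt_of_lt_of_le (hzs ▸ hcz) ?_
    refine le_trans ?_ (le_iSup _ s)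
    rw [iSup_pos hs0, iSup_pos (by rw [hzs]; exact hzx)]

theorem biSup_rpow {P : ℝ} (hP : 0 < P) (x : ℝ≥0∞) :
    ⨆ (s : ℝ) (_ : 0 < s) (_ : ENNReal.ofReal s < x), (ENNReal.ofReal s) ^ (1/P) = x ^ (1/P) := by
  apply le_antisymm
  · exact iSup_le fun s => iSup_le fun _ => iSup_le fun h =>
      ENNReal.rpow_le_rpow h.le (by positivity)
  · refine le_of_forall_lt fun c hc => ?_
    obtain ⟨z, hcz, hzx⟩ := exists_between hc
    have hzt : z ≠ ∞ := hzx.ne_top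
    have hz0 : z ≠ 0 := by
      intro h; rw [h] at hcz; exact absurd hcz (not_lt.2 zero_le)
    set r := z.toReal with hr
    have hr0 : 0 < r := ENNReal.toReal_pos hz0 hzt
    have hzr : ENNReal.ofReal r = z := ENNReal.ofReal_toReal hzt
    set s := r ^ P with hsdef
    have hs0 : 0 < s := Real.rpow_pos_of_pos hr0 _
    have hofs : ENNReal.ofReal s = z ^ P := by
      rw [hsdef, ← ENNReal.ofReal_rpow_of_pos hr0, hzr]
    have hcond : ENNReal.ofReal s < x := by
      rw [hofs]
      calc z ^ P < (x ^ (1/P)) ^ P := ENNReal.rpow_lt_rpow hzx hP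
        _ = x := by rw [← ENNReal.rpow_mul, one_div, inv_mul_cancel₀ hP.ne', ENNReal.rpow_one]
    have hterm : (ENNReal.ofReal s) ^ (1/P) = z := by
      rw [hofs, ← ENNReal.rpow_mul, mul_one_div, div_self hP.ne', ENNReal.rpow_one]
    refine lt_of_lt_of_le (hterm ▸ hcz) ?_
    refine le_trans ?_ (le_iSup _ s)
    rw [iSup_pos hs0, iSup_pos hcond]

theorem lorentz_top {P : ℝ} (hP : 0 < P) :
    lorentzNorm P ∞ f = ⨆ (t : ℝ) (_ : 0 < t), (ENNReal.ofReal t) ^ (1/P) * rearr f t := by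
  rw [lorentzNorm, if_pos rfl]
  apply le_antisymm
  · refine iSup_le fun s => iSup_le fun hs => ?_
    rw [← biSup_rpow hP (distFun f s)]
    rw [ENNReal.mul_iSup]
    refine iSup_le fun t => ?_
    rw [ENNReal.mul_iSup]
    refine iSup_le fun ht => ?_
    rw [ENNReal.mul_iSup]
    refine iSup_le fun hlt => ?_
    have h1 : ENNReal.ofReal s ≤ rearr f t := ((lt_rearr_iff hs.le).2 hlt).le
    calc ENNReal.ofReal s * (ENNReal.ofReal t) ^ (1/P)
        ≤ (ENNReal.ofReal t) ^ (1/P) * rearr f t := by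
          rw [mul_comm]; exact mul_le_mul_right h1 _
      _ ≤ ⨆ (t : ℝ) (_ : 0 < t), (ENNReal.ofReal t) ^ (1/P) * rearr f t := by
          refine le_trans ?_ (le_iSup _ t)
          rw [iSup_pos ht]
  · refine iSup_le fun t => iSup_le fun ht => ?_
    rw [← biSup_ofReal (rearr f t)]
    rw [ENNReal.mul_iSup]
    refine iSup_le fun s => ?_
    rw [ENNReal.mul_iSup]
    refine iSup_le fun hs => ?_
    rw [ENNReal.mul_iSup]
    refine iSup_le fun hlt => ?_
    have h1 : ENNReal.ofReal t < distFun f s := (lt_rearr_iff hs.le).1 hlt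
    calc (ENNReal.ofReal t) ^ (1/P) * ENNReal.ofReal s
        ≤ ENNReal.ofReal s * distFun f s ^ (1/P) := by
          rw [mul_comm]
          exact mul_le_mul_right (ENNReal.rpow_le_rpow h1.le (by positivity)) _
      _ ≤ ⨆ (s : ℝ) (_ : 0 < s), ENNReal.ofReal s * distFun f s ^ (1/P) := by
          refine le_trans ?_ (le_iSup _ s)
          rw [iSup_pos hs]

theorem lintegral_comp_half (ψ : ℝ → ℝ≥0∞) (hψ : Measurable ψ) :
    ∫⁻ t in Ioi (0:ℝ), ψ (t/2) = 2 * ∫⁻ t in Ioi (0:ℝ), ψ t := by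
  have hm : Measurable fun t : ℝ => (2:ℝ)⁻¹ * t := measurable_id.const_mul _
  have hmap : Measure.map (fun t : ℝ => (2:ℝ)⁻¹ * t) volume
      = ENNReal.ofReal |((2:ℝ)⁻¹)⁻¹| • volume := Real.map_volume_mul_left (by norm_num)
  have hpre : (fun t : ℝ => (2:ℝ)⁻¹ * t)⁻¹' (Ioi 0) = Ioi 0 := by
    ext t
    simp only [mem_preimage, mem_Ioi]
    constructor
    · intro h; nlinarith
    · intro h; positivity
  have hdiv : ∀ t : ℝ, t/2 = (2:ℝ)⁻¹ * t := fun t => by ring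
  simp_rw [hdiv]
  rw [← lintegral_map hψ hm]
  conv_lhs => rw [← hpre]
  rw [← Measure.restrict_map hm measurableSet_Ioi, hmap, Measure.restrict_smul,
    lintegral_smul_measure]
  norm_num

theorem ofReal_half_rpow {t : ℝ} (e : ℝ) :
    (ENNReal.ofReal t) ^ e = (2:ℝ≥0∞) ^ e * (ENNReal.ofReal (t/2)) ^ e := by
  have h2 : ENNReal.ofReal t = 2 * ENNReal.ofReal (t/2) := by
    rw [← ENNReal.ofReal_ofNat, ← ENNReal.ofReal_mul (by norm_num)]
    congr 1
    ring
  rw [h2, ENNReal.mul_rpow_of_ne_top (by norm_num) ENNReal.ofReal_ne_top]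

theorem half_rpow (t e : ℝ) :
    (ENNReal.ofReal (t/2)) ^ e = (2:ℝ≥0∞) ^ (-e) * (ENNReal.ofReal t) ^ e := by
  conv_rhs => rw [ofReal_half_rpow (t := t) e]
  rw [← mul_assoc, ← ENNReal.rpow_add _ _ (by norm_num) (by norm_num)]
  norm_num

theorem rearr_prod_le {t : ℝ} (ht : 0 < t) :
    rearr (fun x => f1 x * f2 x) t ≤ rearr f1 (t/2) * rearr f2 (t/2) := by
  have := rearr_mul_le (f1 := f1) (f2 := f2) (t1 := t/2) (t2 := t/2)
    (by linarith) (by linarith)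
  rwa [add_halves] at this

theorem case_top {p p1 p2 : ℝ} (hp1 : 0 < p1) (hp2 : 0 < p2) (hp0 : 0 < p)
    (hreal : 1/p = 1/p1 + 1/p2) :
    lorentzNorm p ∞ (fun x => f1 x * f2 x) ≤
      (2:ℝ≥0∞)^(1/p) * lorentzNorm p1 ∞ f1 * lorentzNorm p2 ∞ f2 := by
  rw [lorentz_top hp0, lorentz_top hp1, lorentz_top hp2]
  refine iSup_le fun t => iSup_le fun ht => ?_
  have h12 := rearr_prod_le (f1 := f1) (f2 := f2) ht
  have hsplit : (ENNReal.ofReal t)^(1/p)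
      = (2:ℝ≥0∞)^(1/p) * ((ENNReal.ofReal (t/2))^(1/p1) * (ENNReal.ofReal (t/2))^(1/p2)) := by
    rw [hreal, ENNReal.rpow_add _ _ (ENNReal.ofReal_pos.2 ht).ne' ENNReal.ofReal_ne_top]
    conv_lhs => rw [ofReal_half_rpow (t := t) (1/p1), ofReal_half_rpow (t := t) (1/p2)]
    rw [ENNReal.rpow_add _ _ (by norm_num) (by norm_num)]
    ring
  have hle1 : (ENNReal.ofReal (t/2))^(1/p1) * rearr f1 (t/2)
      ≤ ⨆ (u : ℝ) (_ : 0 < u), (ENNReal.ofReal u) ^ (1/p1) * rearr f1 u := by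
    refine le_trans ?_ (le_iSup _ (t/2))
    rw [iSup_pos (by linarith : (0:ℝ) < t/2)]
  have hle2 : (ENNReal.ofReal (t/2))^(1/p2) * rearr f2 (t/2)
      ≤ ⨆ (u : ℝ) (_ : 0 < u), (ENNReal.ofReal u) ^ (1/p2) * rearr f2 u := by
    refine le_trans ?_ (le_iSup _ (t/2))
    rw [iSup_pos (by linarith : (0:ℝ) < t/2)]
  calc (ENNReal.ofReal t)^(1/p) * rearr (fun x => f1 x * f2 x) t
      ≤ (ENNReal.ofReal t)^(1/p) * (rearr f1 (t/2) * rearr f2 (t/2)) :=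
        mul_le_mul_right h12 _
    _ = (2:ℝ≥0∞)^(1/p) * (((ENNReal.ofReal (t/2))^(1/p1) * rearr f1 (t/2)) *
          ((ENNReal.ofReal (t/2))^(1/p2) * rearr f2 (t/2))) := by
        rw [hsplit]; ring
    _ ≤ (2:ℝ≥0∞)^(1/p) * ((⨆ (u : ℝ) (_ : 0 < u), (ENNReal.ofReal u) ^ (1/p1) * rearr f1 u) *
          (⨆ (u : ℝ) (_ : 0 < u), (ENNReal.ofReal u) ^ (1/p2) * rearr f2 u)) :=
        mul_le_mul_right (mul_le_mul' hle1 hle2) _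
    _ = _ := by rw [mul_assoc]

theorem weak_bound {p1 : ℝ} (hp1 : 0 < p1) {u : ℝ} (hu : 0 < u) :
    rearr f1 u ≤ lorentzNorm p1 ∞ f1 * (ENNReal.ofReal u) ^ (-(1/p1)) := by
  have hsup : (ENNReal.ofReal u)^(1/p1) * rearr f1 u ≤ lorentzNorm p1 ∞ f1 := by
    rw [lorentz_top hp1]
    refine le_trans ?_ (le_iSup _ u)
    rw [iSup_pos hu]
  have hx0 : ((ENNReal.ofReal u)^(1/p1)) ≠ 0 :=
    (ENNReal.rpow_pos (ENNReal.ofReal_pos.2 hu) ENNReal.ofReal_ne_top).ne'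
  have hxt : ((ENNReal.ofReal u)^(1/p1)) ≠ ∞ :=
    ENNReal.rpow_ne_top_of_nonneg (by positivity) ENNReal.ofReal_ne_top
  calc rearr f1 u
      = ((ENNReal.ofReal u)^(1/p1))⁻¹ * ((ENNReal.ofReal u)^(1/p1) * rearr f1 u) := by
        rw [← mul_assoc, ENNReal.inv_mul_cancel hx0 hxt, one_mul]
    _ ≤ ((ENNReal.ofReal u)^(1/p1))⁻¹ * lorentzNorm p1 ∞ f1 := mul_le_mul_right hsup _
    _ = lorentzNorm p1 ∞ f1 * (ENNReal.ofReal u) ^ (-(1/p1)) := by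
        rw [ENNReal.rpow_neg, mul_comm]

theorem rpow_prod_expand {Q : ℝ} (hQ : 0 ≤ Q) (a b c : ℝ≥0∞) :
    (a * b * c) ^ Q = a ^ Q * b ^ Q * c ^ Q := by
  rw [ENNReal.mul_rpow_of_nonneg _ _ hQ, ENNReal.mul_rpow_of_nonneg _ _ hQ]

theorem case_mixed {p p1 p2 : ℝ} (hp1 : 0 < p1) (hp2 : 0 < p2) (hp0 : 0 < p)
    (hreal : 1/p = 1/p1 + 1/p2) {q2 : ℝ≥0∞} (hq20 : q2 ≠ 0) (hq2t : q2 ≠ ∞)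
    (hN1 : lorentzNorm p1 ∞ f1 ≠ ∞) :
    lorentzNorm p q2 (fun x => f1 x * f2 x) ≤
      (2:ℝ≥0∞)^(1/p) * lorentzNorm p1 ∞ f1 * lorentzNorm p2 q2 f2 := by
  have hQ : 0 < q2.toReal := ENNReal.toReal_pos hq20 hq2t
  have h2ne : ∀ e : ℝ, (2:ℝ≥0∞)^e ≠ ∞ := fun e => by simp [ENNReal.rpow_eq_top_iff]
  have hQsplit : q2.toReal/p = q2.toReal/p1 + q2.toReal/p2 := by
    rw [div_eq_mul_one_div q2.toReal p, div_eq_mul_one_div q2.toReal p1,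
      div_eq_mul_one_div q2.toReal p2, hreal]; ring
  refine (ENNReal.rpow_le_rpow_iff hQ).1 ?_
  rw [lorentz_pow hp0 hq20 hq2t]
  have hRHS : ((2:ℝ≥0∞)^(1/p) * lorentzNorm p1 ∞ f1 * lorentzNorm p2 q2 f2)^q2.toReal
      = (2:ℝ≥0∞)^(q2.toReal/p) * (lorentzNorm p1 ∞ f1)^q2.toReal *
        (lorentzNorm p2 q2 f2)^q2.toReal := by
    rw [rpow_prod_expand hQ.le, ← ENNReal.rpow_mul, show (1/p)*q2.toReal = q2.toReal/p by ring]
  rw [hRHS]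
  have hconst_ne : ((lorentzNorm p1 ∞ f1)^q2.toReal * (2:ℝ≥0∞)^(q2.toReal/p1)) ≠ ∞ :=
    ENNReal.mul_ne_top (ENNReal.rpow_ne_top_of_nonneg hQ.le hN1) (h2ne _)
  have hpw : ∀ t ∈ Ioi (0:ℝ),
      (ENNReal.ofReal t)^(q2.toReal/p-1) * rearr (fun x => f1 x * f2 x) t ^ q2.toReal
        ≤ ((lorentzNorm p1 ∞ f1)^q2.toReal * (2:ℝ≥0∞)^(q2.toReal/p1)) *
          ((ENNReal.ofReal t)^(q2.toReal/p2-1) * rearr f2 (t/2) ^ q2.toReal) := by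
    intro t ht
    rw [mem_Ioi] at ht
    have hyQ : ((ENNReal.ofReal (t/2))^(-(1/p1)))^q2.toReal
        = (2:ℝ≥0∞)^(q2.toReal/p1) * (ENNReal.ofReal t)^(-(q2.toReal/p1)) := by
      rw [← ENNReal.rpow_mul, show -(1/p1)*q2.toReal = -(q2.toReal/p1) by ring,
        half_rpow t (-(q2.toReal/p1)), neg_neg]
    have hcomb : (ENNReal.ofReal t)^(q2.toReal/p-1) * (ENNReal.ofReal t)^(-(q2.toReal/p1))
        = (ENNReal.ofReal t)^(q2.toReal/p2-1) := by
      rw [← ENNReal.rpow_add _ _ (ENNReal.ofReal_pos.2 ht).ne' ENNReal.ofReal_ne_top]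
      congr 1
      linarith [hQsplit]
    calc (ENNReal.ofReal t)^(q2.toReal/p-1) * rearr (fun x => f1 x * f2 x) t ^ q2.toReal
        ≤ (ENNReal.ofReal t)^(q2.toReal/p-1) *
            (rearr f1 (t/2) * rearr f2 (t/2)) ^ q2.toReal :=
          mul_le_mul_right (ENNReal.rpow_le_rpow (rearr_prod_le ht) hQ.le) _
      _ ≤ (ENNReal.ofReal t)^(q2.toReal/p-1) *
            ((lorentzNorm p1 ∞ f1 * (ENNReal.ofReal (t/2))^(-(1/p1))) *
              rearr f2 (t/2)) ^ q2.toReal :=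
          mul_le_mul_right (ENNReal.rpow_le_rpow
            (mul_le_mul_left (weak_bound hp1 (by linarith)) _) hQ.le) _
      _ = (ENNReal.ofReal t)^(q2.toReal/p-1) *
            ((lorentzNorm p1 ∞ f1)^q2.toReal *
              ((2:ℝ≥0∞)^(q2.toReal/p1) * (ENNReal.ofReal t)^(-(q2.toReal/p1))) *
              rearr f2 (t/2) ^ q2.toReal) := by
          rw [rpow_prod_expand hQ.le, hyQ]
      _ = ((lorentzNorm p1 ∞ f1)^q2.toReal * (2:ℝ≥0∞)^(q2.toReal/p1)) *
            (((ENNReal.ofReal t)^(q2.toReal/p-1) * (ENNReal.ofReal t)^(-(q2.toReal/p1))) *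
              rearr f2 (t/2) ^ q2.toReal) := by
          ring
      _ = _ := by rw [hcomb]
  have hmeas2 : Measurable fun u : ℝ =>
      (ENNReal.ofReal u)^(q2.toReal/p2-1) * rearr f2 u ^ q2.toReal :=
    (ENNReal.measurable_ofReal.pow_const _).mul (rearr_measurable.pow_const _)
  have h2split : (2:ℝ≥0∞)^(q2.toReal/p2) = (2:ℝ≥0∞)^(q2.toReal/p2-1) * 2 := by
    conv_lhs => rw [show q2.toReal/p2 = (q2.toReal/p2-1)+1 by ring]
    rw [ENNReal.rpow_add _ _ (by norm_num) (by norm_num), ENNReal.rpow_one]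
  calc ∫⁻ t in Ioi (0:ℝ),
        (ENNReal.ofReal t)^(q2.toReal/p-1) * rearr (fun x => f1 x * f2 x) t ^ q2.toReal
      ≤ ∫⁻ t in Ioi (0:ℝ), ((lorentzNorm p1 ∞ f1)^q2.toReal * (2:ℝ≥0∞)^(q2.toReal/p1)) *
          ((ENNReal.ofReal t)^(q2.toReal/p2-1) * rearr f2 (t/2) ^ q2.toReal) := by
        refine lintegral_mono_ae ?_
        filter_upwards [ae_restrict_mem measurableSet_Ioi] with t ht
        exact hpw t ht
    _ = ((lorentzNorm p1 ∞ f1)^q2.toReal * (2:ℝ≥0∞)^(q2.toReal/p1)) *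
          ∫⁻ t in Ioi (0:ℝ), (ENNReal.ofReal t)^(q2.toReal/p2-1) * rearr f2 (t/2) ^ q2.toReal :=
        lintegral_const_mul' _ _ hconst_ne
    _ = ((lorentzNorm p1 ∞ f1)^q2.toReal * (2:ℝ≥0∞)^(q2.toReal/p1)) * ((2:ℝ≥0∞)^(q2.toReal/p2-1) *
          ∫⁻ t in Ioi (0:ℝ), (ENNReal.ofReal (t/2))^(q2.toReal/p2-1) * rearr f2 (t/2) ^ q2.toReal) := by
        rw [← lintegral_const_mul' _ _ (h2ne (q2.toReal/p2-1))]
        congr 1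
        refine lintegral_congr_ae ?_
        filter_upwards [ae_restrict_mem measurableSet_Ioi] with t ht
        rw [ofReal_half_rpow (t := t) (q2.toReal/p2-1), mul_assoc]
    _ = ((lorentzNorm p1 ∞ f1)^q2.toReal * (2:ℝ≥0∞)^(q2.toReal/p1)) * ((2:ℝ≥0∞)^(q2.toReal/p2-1) *
          (2 * ∫⁻ u in Ioi (0:ℝ), (ENNReal.ofReal u)^(q2.toReal/p2-1) * rearr f2 u ^ q2.toReal)) := by
        rw [lintegral_comp_half _ hmeas2]
    _ = (2:ℝ≥0∞)^(q2.toReal/p) * (lorentzNorm p1 ∞ f1)^q2.toReal *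
          (lorentzNorm p2 q2 f2)^q2.toReal := by
        rw [← lorentz_pow hp2 hq20 hq2t,
          show (2:ℝ≥0∞)^(q2.toReal/p) = (2:ℝ≥0∞)^(q2.toReal/p1) * (2:ℝ≥0∞)^(q2.toReal/p2) from by
            rw [← ENNReal.rpow_add _ _ (by norm_num) (by norm_num), ← hQsplit],
          h2split]
        ring

/-- `∫ F^α` computation, used for both factors. -/
theorem holder_factor {P1 Q Q1 : ℝ} (hP1 : 0 < P1) (hQ : 0 < Q) (hQ1 : 0 < Q1)
    (g : EuclideanSpace ℝ (Fin d) → ℂ) :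
    ∫⁻ t in Ioi (0:ℝ),
        ((ENNReal.ofReal t) ^ (Q/P1 - Q/Q1) * rearr g (t/2) ^ Q) ^ (Q1/Q)
      = (2:ℝ≥0∞) ^ (Q1/P1) *
        ∫⁻ u in Ioi (0:ℝ), (ENNReal.ofReal u) ^ (Q1/P1 - 1) * rearr g u ^ Q1 := by
  have h2ne : ∀ e : ℝ, (2:ℝ≥0∞)^e ≠ ∞ := fun e => by simp [ENNReal.rpow_eq_top_iff]
  have hmeas : Measurable fun u : ℝ =>
      (ENNReal.ofReal u) ^ (Q1/P1 - 1) * rearr g u ^ Q1 :=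
    (ENNReal.measurable_ofReal.pow_const _).mul (rearr_measurable.pow_const _)
  have hexp1 : (Q/P1 - Q/Q1) * (Q1/Q) = Q1/P1 - 1 := by
    field_simp
  have hexp2 : Q * (Q1/Q) = Q1 := by field_simp
  have h2split : (2:ℝ≥0∞)^(Q1/P1) = (2:ℝ≥0∞)^(Q1/P1-1) * 2 := by
    conv_lhs => rw [show Q1/P1 = (Q1/P1-1)+1 by ring]
    rw [ENNReal.rpow_add _ _ (by norm_num) (by norm_num), ENNReal.rpow_one]
  calc ∫⁻ t in Ioi (0:ℝ), ((ENNReal.ofReal t) ^ (Q/P1 - Q/Q1) * rearr g (t/2) ^ Q) ^ (Q1/Q)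
      = ∫⁻ t in Ioi (0:ℝ), (ENNReal.ofReal t) ^ (Q1/P1 - 1) * rearr g (t/2) ^ Q1 := by
        refine lintegral_congr fun t => ?_
        rw [ENNReal.mul_rpow_of_nonneg _ _ (by positivity), ← ENNReal.rpow_mul,
          ← ENNReal.rpow_mul, hexp1, hexp2]
    _ = (2:ℝ≥0∞)^(Q1/P1-1) *
          ∫⁻ t in Ioi (0:ℝ), (ENNReal.ofReal (t/2)) ^ (Q1/P1 - 1) * rearr g (t/2) ^ Q1 := by
        rw [← lintegral_const_mul' _ _ (h2ne (Q1/P1-1))]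
        refine lintegral_congr_ae ?_
        filter_upwards [ae_restrict_mem measurableSet_Ioi] with t ht
        rw [ofReal_half_rpow (t := t) (Q1/P1-1), mul_assoc]
    _ = (2:ℝ≥0∞)^(Q1/P1-1) *
          (2 * ∫⁻ u in Ioi (0:ℝ), (ENNReal.ofReal u) ^ (Q1/P1 - 1) * rearr g u ^ Q1) := by
        rw [lintegral_comp_half _ hmeas]
    _ = _ := by rw [h2split]; ring

theorem case_fin {p p1 p2 : ℝ} (hp1 : 0 < p1) (hp2 : 0 < p2) (hp0 : 0 < p)
    (hreal : 1/p = 1/p1 + 1/p2) {q q1 q2 : ℝ≥0∞}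
    (hq0 : q ≠ 0) (hqt : q ≠ ∞) (hq10 : q1 ≠ 0) (hq1t : q1 ≠ ∞)
    (hq20 : q2 ≠ 0) (hq2t : q2 ≠ ∞)
    (hQreal : q.toReal⁻¹ = q1.toReal⁻¹ + q2.toReal⁻¹) :
    lorentzNorm p q (fun x => f1 x * f2 x) ≤
      (2:ℝ≥0∞)^(1/p) * lorentzNorm p1 q1 f1 * lorentzNorm p2 q2 f2 := by
  have hQ : 0 < q.toReal := ENNReal.toReal_pos hq0 hqt
  have hQ1 : 0 < q1.toReal := ENNReal.toReal_pos hq10 hq1t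
  have hQ2 : 0 < q2.toReal := ENNReal.toReal_pos hq20 hq2t
  have h2ne : ∀ e : ℝ, (2:ℝ≥0∞)^e ≠ ∞ := fun e => by simp [ENNReal.rpow_eq_top_iff]
  have hQQ : q.toReal/q1.toReal + q.toReal/q2.toReal = 1 := by
    rw [div_eq_mul_inv, div_eq_mul_inv, ← mul_add, ← hQreal, mul_inv_cancel₀ hQ.ne']
  have hQlt : q.toReal < q1.toReal := by
    nlinarith [mul_inv_cancel₀ hQ.ne', mul_inv_cancel₀ hQ1.ne', inv_pos.2 hQ2,
      mul_pos hQ hQ1, inv_pos.2 hQ1, inv_pos.2 hQ]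
  have hconj : Real.HolderConjugate (q1.toReal/q.toReal) (q2.toReal/q.toReal) := by
    constructor
    · rw [inv_div, inv_div, inv_one]; exact hQQ
    · positivity
    · positivity
  have hQsplit : q.toReal/p = q.toReal/p1 + q.toReal/p2 := by
    rw [div_eq_mul_one_div q.toReal p, div_eq_mul_one_div q.toReal p1,
      div_eq_mul_one_div q.toReal p2, hreal]; ring
  refine (ENNReal.rpow_le_rpow_iff hQ).1 ?_
  rw [lorentz_pow hp0 hq0 hqt]
  have hN1Q : (lorentzNorm p1 q1 f1) ^ q.toReal
      = (∫⁻ u in Ioi (0:ℝ), (ENNReal.ofReal u) ^ (q1.toReal/p1 - 1) * rearr f1 u ^ q1.toReal)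
        ^ (q.toReal/q1.toReal) := by
    rw [← lorentz_pow hp1 hq10 hq1t, ← ENNReal.rpow_mul,
      show q1.toReal * (q.toReal/q1.toReal) = q.toReal from by field_simp]
  have hN2Q : (lorentzNorm p2 q2 f2) ^ q.toReal
      = (∫⁻ u in Ioi (0:ℝ), (ENNReal.ofReal u) ^ (q2.toReal/p2 - 1) * rearr f2 u ^ q2.toReal)
        ^ (q.toReal/q2.toReal) := by
    rw [← lorentz_pow hp2 hq20 hq2t, ← ENNReal.rpow_mul,
      show q2.toReal * (q.toReal/q2.toReal) = q.toReal from by field_simp]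
  rw [rpow_prod_expand hQ.le, hN1Q, hN2Q, ← ENNReal.rpow_mul,
    show (1/p) * q.toReal = q.toReal/p from by ring]
  set F : ℝ → ℝ≥0∞ := fun t =>
    (ENNReal.ofReal t) ^ (q.toReal/p1 - q.toReal/q1.toReal) * rearr f1 (t/2) ^ q.toReal with hF
  set G : ℝ → ℝ≥0∞ := fun t =>
    (ENNReal.ofReal t) ^ (q.toReal/p2 - q.toReal/q2.toReal) * rearr f2 (t/2) ^ q.toReal with hG
  have hFmeas : Measurable F :=
    (ENNReal.measurable_ofReal.pow_const _).mul
      ((rearr_measurable.comp (measurable_id.div_const 2)).pow_const _)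
  have hGmeas : Measurable G :=
    (ENNReal.measurable_ofReal.pow_const _).mul
      ((rearr_measurable.comp (measurable_id.div_const 2)).pow_const _)
  calc ∫⁻ t in Ioi (0:ℝ),
        (ENNReal.ofReal t) ^ (q.toReal/p - 1) * rearr (fun x => f1 x * f2 x) t ^ q.toReal
      ≤ ∫⁻ t in Ioi (0:ℝ), (F * G) t := by
        refine lintegral_mono_ae ?_
        filter_upwards [ae_restrict_mem measurableSet_Ioi] with t ht
        rw [mem_Ioi] at ht
        have hsplit : (ENNReal.ofReal t) ^ (q.toReal/p - 1)
            = (ENNReal.ofReal t) ^ (q.toReal/p1 - q.toReal/q1.toReal) *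
              (ENNReal.ofReal t) ^ (q.toReal/p2 - q.toReal/q2.toReal) := by
          rw [← ENNReal.rpow_add _ _ (ENNReal.ofReal_pos.2 ht).ne' ENNReal.ofReal_ne_top]
          congr 1
          linarith [hQsplit, hQQ]
        calc (ENNReal.ofReal t) ^ (q.toReal/p - 1) * rearr (fun x => f1 x * f2 x) t ^ q.toReal
            ≤ (ENNReal.ofReal t) ^ (q.toReal/p - 1) *
                (rearr f1 (t/2) * rearr f2 (t/2)) ^ q.toReal :=
              mul_le_mul_right (ENNReal.rpow_le_rpow (rearr_prod_le ht) hQ.le) _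
          _ = (F * G) t := by
              rw [Pi.mul_apply, hF, hG]
              simp only []
              rw [ENNReal.mul_rpow_of_nonneg _ _ hQ.le, hsplit]
              ring
    _ ≤ (∫⁻ t in Ioi (0:ℝ), F t ^ (q1.toReal/q.toReal)) ^ (1/(q1.toReal/q.toReal)) *
        (∫⁻ t in Ioi (0:ℝ), G t ^ (q2.toReal/q.toReal)) ^ (1/(q2.toReal/q.toReal)) :=
        ENNReal.lintegral_mul_le_Lp_mul_Lq _ hconj hFmeas.aemeasurable hGmeas.aemeasurable
    _ = (2:ℝ≥0∞)^(q.toReal/p) *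
        (∫⁻ u in Ioi (0:ℝ), (ENNReal.ofReal u) ^ (q1.toReal/p1 - 1) * rearr f1 u ^ q1.toReal)
          ^ (q.toReal/q1.toReal) *
        (∫⁻ u in Ioi (0:ℝ), (ENNReal.ofReal u) ^ (q2.toReal/p2 - 1) * rearr f2 u ^ q2.toReal)
          ^ (q.toReal/q2.toReal) := by
        rw [hF, hG]
        rw [holder_factor hp1 hQ hQ1 f1, holder_factor hp2 hQ hQ2 f2]
        rw [one_div, inv_div, one_div, inv_div]
        rw [ENNReal.mul_rpow_of_nonneg _ _ (by positivity),
          ENNReal.mul_rpow_of_nonneg _ _ (by positivity)]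
        rw [← ENNReal.rpow_mul 2 (q1.toReal/p1), ← ENNReal.rpow_mul 2 (q2.toReal/p2)]
        rw [show q1.toReal/p1 * (q.toReal/q1.toReal) = q.toReal/p1 from by field_simp,
          show q2.toReal/p2 * (q.toReal/q2.toReal) = q.toReal/p2 from by field_simp]
        rw [show (2:ℝ≥0∞)^(q.toReal/p) = 2^(q.toReal/p1) * 2^(q.toReal/p2) from by
          rw [← ENNReal.rpow_add _ _ (by norm_num) (by norm_num), ← hQsplit]]
        ring

end LorentzAux

open LorentzAux in
/-- **Hölder's inequality in Lorentz spaces.**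
For `1 ≤ p₁, p₂ < ∞`, `1 ≤ q₁, q₂ ≤ ∞`, `1/p = 1/p₁ + 1/p₂` (so `p < ∞`) and
`1/q = 1/q₁ + 1/q₂`, there is a constant `C` depending only on the exponents such that
`f₁ ∈ L^{p₁,q₁}` and `f₂ ∈ L^{p₂,q₂}` imply `f₁ f₂ ∈ L^{p,q}` with
`‖f₁ f₂‖_{L^{p,q}} ≤ C ‖f₁‖_{L^{p₁,q₁}} ‖f₂‖_{L^{p₂,q₂}}`. -/
theorem lorentz_holder (d : ℕ) (p p1 p2 : ℝ) (q q1 q2 : ℝ≥0∞)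
    (hp1 : 1 ≤ p1) (hp2 : 1 ≤ p2) (hq1 : 1 ≤ q1) (hq2 : 1 ≤ q2)
    (hp : p⁻¹ = p1⁻¹ + p2⁻¹) (hq : q⁻¹ = q1⁻¹ + q2⁻¹) :
    ∃ C : ℝ≥0∞, 0 < C ∧ C < ∞ ∧
      ∀ f1 f2 : EuclideanSpace ℝ (Fin d) → ℂ,
        AEMeasurable f1 volume → AEMeasurable f2 volume →
        lorentzNorm p1 q1 f1 < ∞ → lorentzNorm p2 q2 f2 < ∞ →
        lorentzNorm p q (fun x => f1 x * f2 x) < ∞ ∧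
        lorentzNorm p q (fun x => f1 x * f2 x) ≤
          C * lorentzNorm p1 q1 f1 * lorentzNorm p2 q2 f2 := by
  have hp1' : (0:ℝ) < p1 := lt_of_lt_of_le one_pos hp1
  have hp2' : (0:ℝ) < p2 := lt_of_lt_of_le one_pos hp2
  have hp0 : 0 < p := by
    have h : 0 < p⁻¹ := by rw [hp]; positivity
    exact inv_pos.1 h
  have hreal : 1/p = 1/p1 + 1/p2 := by rw [one_div, one_div, one_div]; exact hp
  have h2ne : ((2:ℝ≥0∞)^(1/p)) ≠ ∞ := by simp [ENNReal.rpow_eq_top_iff]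
  refine ⟨(2:ℝ≥0∞)^(1/p), ENNReal.rpow_pos (by norm_num) (by norm_num),
    lt_top_iff_ne_top.2 h2ne, ?_⟩
  intro f1 f2 _ _ hN1 hN2
  have hq10 : q1 ≠ 0 := by
    intro h; rw [h] at hq1; exact absurd hq1 (by simp)
  have hq20 : q2 ≠ 0 := by
    intro h; rw [h] at hq2; exact absurd hq2 (by simp)
  have key : lorentzNorm p q (fun x => f1 x * f2 x) ≤
      (2:ℝ≥0∞)^(1/p) * lorentzNorm p1 q1 f1 * lorentzNorm p2 q2 f2 := by
    by_cases h1t : q1 = ∞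
    · by_cases h2t : q2 = ∞
      · have hqq : q = ∞ := by
          rw [h1t, h2t] at hq
          simp only [ENNReal.inv_top, add_zero, zero_add] at hq
          rwa [ENNReal.inv_eq_zero] at hq
        rw [hqq, h1t, h2t]
        exact case_top hp1' hp2' hp0 hreal
      · have hqq : q = q2 := by
          rw [h1t] at hq
          simp only [ENNReal.inv_top, zero_add] at hq
          exact inv_inj.1 hq
        rw [hqq, h1t]
        rw [h1t] at hN1
        exact case_mixed hp1' hp2' hp0 hreal hq20 h2t hN1.ne
    · by_cases h2t : q2 = ∞
      · have hqq : q = q1 := by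
          rw [h2t] at hq
          simp only [ENNReal.inv_top, add_zero] at hq
          exact inv_inj.1 hq
        rw [hqq, h2t,
          show (fun x => f1 x * f2 x) = (fun x => f2 x * f1 x) from funext fun x => mul_comm _ _]
        rw [h2t] at hN2
        have := case_mixed (f1 := f2) (f2 := f1) hp2' hp1' hp0 (by rw [hreal]; ring)
          hq10 h1t hN2.ne
        refine le_trans this (le_of_eq ?_)
        ring
      · have hq0 : q ≠ 0 := by
          have : q⁻¹ ≠ ∞ := by
            rw [hq]
            exact ENNReal.add_ne_top.2 ⟨ENNReal.inv_ne_top.2 hq10, ENNReal.inv_ne_top.2 hq20⟩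
          rwa [Ne, ENNReal.inv_eq_top] at this
        have hqne : q ≠ ∞ := by
          have : q⁻¹ ≠ 0 := by
            rw [hq]
            intro h
            exact absurd ((add_eq_zero.1 h).1) (ENNReal.inv_ne_zero.2 h1t)
          rwa [Ne, ENNReal.inv_eq_zero] at this
        have hQreal : q.toReal⁻¹ = q1.toReal⁻¹ + q2.toReal⁻¹ := by
          have h := congrArg ENNReal.toReal hq
          rwa [ENNReal.toReal_add (ENNReal.inv_ne_top.2 hq10) (ENNReal.inv_ne_top.2 hq20),
            ENNReal.toReal_inv, ENNReal.toReal_inv, ENNReal.toReal_inv] at h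
        exact case_fin hp1' hp2' hp0 hreal hq0 hqne hq10 h1t hq20 h2t hQreal
  exact ⟨lt_of_le_of_lt key (ENNReal.mul_lt_top
    (ENNReal.mul_lt_top (lt_top_iff_ne_top.2 h2ne) hN1) hN2), key⟩
end
end

section
/- Suppose V = V_+ - V_- with V_+ ∈ L^1_loc(R^3), V_- ∈ L^{3/2}_loc(R^3), and V(x) → ∞ as |x| → ∞. Then for every C > 0 there exists a decomposition V = V_1 + V_2 with V_1 ∈ L^1_loc(R^3; R_+), V_2 ∈ L^{3/2}_loc(R^3; R) with V_2(x) → 0 as |x| → ∞, such that μ_{V_1} - μ_V ≥ C, where μ_W := inf spec(-Δ + W) is the infimum of the quadratic form ⟨u, (-Δ + W) u⟩ over normalized u. -/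
noncomputable section
open MeasureTheory Filter
open scoped ENNReal Topology

abbrev E3 : Type := EuclideanSpace ℝ (Fin 3)

def MemH1 (u : E3 → ℂ) : Prop :=
  MemLp u 2 volume ∧ Differentiable ℝ u ∧ MemLp (fun x => fderiv ℝ u x) 2 volume

def gradSq (u : E3 → ℂ) : ℝ := ∫ x : E3, ‖fderiv ℝ u x‖ ^ 2

def MemQ (V : E3 → ℝ) (u : E3 → ℂ) : Prop :=
  MemH1 u ∧ Integrable (fun x => max (V x) 0 * ‖u x‖ ^ 2) volume

def qf (V : E3 → ℝ) (u : E3 → ℂ) : ℝ :=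
  gradSq u + ∫ x : E3, V x * ‖u x‖ ^ 2

/-- Normalized states in the form domain. -/
def MemU (V : E3 → ℝ) (u : E3 → ℂ) : Prop :=
  MemQ V u ∧ (∫ x : E3, ‖u x‖ ^ 2) = 1

/-- `μ_V = inf spec(-Δ + V)`, as the infimum of the quadratic form over normalized states. -/
def muV (V : E3 → ℝ) : ℝ := sInf {r : ℝ | ∃ u, MemU V u ∧ r = qf V u}

/-- `L^{3/2}_loc` membership. -/
def LocL32 (V : E3 → ℝ) : Prop :=
  ∀ R : ℝ, 0 < R → MemLp V (3 / 2 : ℝ≥0∞) (volume.restrict (Metric.ball (0 : E3) R))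

/-- A fixed normalized smooth bump in `H¹` with compact support. -/
lemma exists_bump : ∃ u : E3 → ℂ, MemH1 u ∧ Continuous u ∧ HasCompactSupport u ∧
    (∫ x : E3, ‖u x‖ ^ 2) = 1 := by
  obtain ⟨φ⟩ : Nonempty (ContDiffBump (0 : E3)) := ⟨⟨1, 2, one_pos, one_lt_two⟩⟩
  set c : ℝ := ∫ x : E3, (φ x) ^ 2 with hc
  have hφ2c : Continuous fun x : E3 => (φ x) ^ 2 := φ.continuous.pow 2
  have hφ2s : HasCompactSupport fun x : E3 => (φ x) ^ 2 :=
    φ.hasCompactSupport.comp_left (g := fun r : ℝ => r ^ 2) (by simp)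
  have hint : Integrable (fun x : E3 => (φ x) ^ 2) volume :=
    hφ2c.integrable_of_hasCompactSupport hφ2s
  have hcpos : 0 < c := by
    rw [hc, integral_pos_iff_support_of_nonneg (fun x => sq_nonneg _) hint]
    have hsupp : (Function.support fun x : E3 => (φ x) ^ 2) = Metric.ball 0 φ.rOut := by
      rw [← φ.support_eq]
      ext x
      simp [Function.mem_support, pow_eq_zero_iff]
    rw [hsupp]
    exact Metric.measure_ball_pos _ _ φ.rOut_pos
  set s : ℝ := (Real.sqrt c)⁻¹ with hs
  have hs2 : s ^ 2 = c⁻¹ := by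
    rw [hs, inv_pow, Real.sq_sqrt hcpos.le]
  set u : E3 → ℂ := fun x => ((s * φ x : ℝ) : ℂ) with hu
  have husmooth : ContDiff ℝ 1 u :=
    Complex.ofRealCLM.contDiff.comp (contDiff_const.mul (φ.contDiff (n := 1)))
  have hucont : Continuous u := husmooth.continuous
  have husupp : HasCompactSupport u :=
    φ.hasCompactSupport.comp_left (g := fun r : ℝ => ((s * r : ℝ) : ℂ)) (by simp)
  have hnorm : ∀ x, ‖u x‖ ^ 2 = c⁻¹ * (φ x) ^ 2 := by
    intro x
    have h : ‖u x‖ ^ 2 = (s * φ x) ^ 2 := by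
      rw [hu]
      rw [Complex.norm_real, Real.norm_eq_abs, sq_abs]
    rw [h, mul_pow, hs2]
  have hnormint : (∫ x : E3, ‖u x‖ ^ 2) = 1 := by
    simp_rw [hnorm]
    rw [integral_const_mul, ← hc, inv_mul_cancel₀ hcpos.ne']
  refine ⟨u, ⟨?_, husmooth.differentiable one_ne_zero, ?_⟩, hucont, husupp, hnormint⟩
  · exact hucont.memLp_of_hasCompactSupport husupp
  · have hcf : Continuous (fderiv ℝ u) := husmooth.continuous_fderiv one_ne_zero
    have hsf : HasCompactSupport (fderiv ℝ u) := HasCompactSupport.fderiv (𝕜 := ℝ) husupp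
    exact hcf.memLp_of_hasCompactSupport hsf

/-- If `V₊` is locally integrable, any normalized `H¹` bump is in the form domain of `V`. -/
lemma memU_of_bump (V : E3 → ℝ)
    (hV : LocallyIntegrable (fun x => max (V x) 0) volume)
    (u : E3 → ℂ) (h1 : MemH1 u) (hc : Continuous u) (hsupp : HasCompactSupport u)
    (hn : (∫ x : E3, ‖u x‖ ^ 2) = 1) : MemU V u := by
  refine ⟨⟨h1, ?_⟩, hn⟩
  have hgc : Continuous fun x : E3 => ‖u x‖ ^ 2 := (hc.norm).pow 2
  have hgs : HasCompactSupport fun x : E3 => ‖u x‖ ^ 2 :=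
    hsupp.comp_left (g := fun z : ℂ => ‖z‖ ^ 2) (by simp)
  simpa only [smul_eq_mul] using hV.integrable_smul_right_of_hasCompactSupport hgc hgs

lemma muV_le_max (V : E3 → ℝ) (u : E3 → ℂ) (hu : MemU V u) :
    muV V ≤ max (qf V u) 0 := by
  set S := {r : ℝ | ∃ v, MemU V v ∧ r = qf V v} with hS
  have hmem : qf V u ∈ S := ⟨u, hu, rfl⟩
  by_cases hb : BddBelow S
  · exact (csInf_le hb hmem).trans (le_max_left _ _)
  · rw [muV, ← hS, csInf_of_not_bddBelow hb, Real.sInf_empty]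
    exact le_max_right _ _

lemma le_muV (W : E3 → ℝ) (M : ℝ) (hM : 0 ≤ M) (hW : ∀ x, M ≤ W x)
    (hne : {r : ℝ | ∃ u, MemU W u ∧ r = qf W u}.Nonempty) : M ≤ muV W := by
  refine le_csInf hne ?_
  rintro r ⟨u, hu, rfl⟩
  have hmax : ∀ x, max (W x) 0 = W x := fun x => max_eq_left (hM.trans (hW x))
  have hint : Integrable (fun x : E3 => W x * ‖u x‖ ^ 2) volume := by
    have := hu.1.2
    simpa only [hmax] using this
  have hgrad : 0 ≤ gradSq u := integral_nonneg fun x => sq_nonneg _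
  have hle : (∫ x : E3, M * ‖u x‖ ^ 2) ≤ ∫ x : E3, W x * ‖u x‖ ^ 2 := by
    refine integral_mono_of_nonneg (ae_of_all _ fun x => ?_) hint (ae_of_all _ fun x => ?_)
    · exact mul_nonneg hM (sq_nonneg _)
    · exact mul_le_mul_of_nonneg_right (hW x) (sq_nonneg _)
  have hM1 : (∫ x : E3, M * ‖u x‖ ^ 2) = M := by
    rw [integral_const_mul, hu.2, mul_one]
  rw [qf]
  linarith

/-- If `V = V_+ - V_-` with `V_+ ∈ L¹_loc`, `V_- ∈ L^{3/2}_loc` and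
`V(x) → ∞` as `|x| → ∞`, then for every `C > 0` there is a decomposition `V = V₁ + V₂`
with `V₁ ≥ 0` locally integrable, `V₂ ∈ L^{3/2}_loc` vanishing at infinity, and
`μ_{V₁} - μ_V ≥ C`. -/
theorem confining_gap (V : E3 → ℝ)
    (hVp : LocallyIntegrable (fun x => max (V x) 0) volume)
    (hVm : LocL32 (fun x => max (-V x) 0))
    (hVinf : Tendsto V (cocompact E3) atTop) :
    ∀ C : ℝ, 0 < C → ∃ V1 V2 : E3 → ℝ,
      (∀ x, V x = V1 x + V2 x) ∧ (∀ x, 0 ≤ V1 x) ∧ LocallyIntegrable V1 volume ∧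
      LocL32 V2 ∧ Tendsto V2 (cocompact E3) (nhds 0) ∧
      muV V1 - muV V ≥ C := by
  intro C hC
  obtain ⟨u0, h1, hcont, hsupp, hn⟩ := exists_bump
  set A : ℝ := max (qf V u0) 0 with hA
  have hA0 : 0 ≤ A := le_max_right _ _
  set M : ℝ := C + A with hM
  have hM0 : 0 < M := by positivity
  set V1 : E3 → ℝ := fun x => max (max (V x) 0) M with hV1
  set V2 : E3 → ℝ := fun x => V x - V1 x with hV2
  have hV1nonneg : ∀ x, 0 ≤ V1 x := fun x => hM0.le.trans (le_max_right _ _)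
  have hV1geM : ∀ x, M ≤ V1 x := fun x => le_max_right _ _
  have hV1asm : AEStronglyMeasurable V1 volume :=
    hVp.aestronglyMeasurable.sup aestronglyMeasurable_const
  have hV1loc : LocallyIntegrable V1 volume := by
    refine (hVp.add (locallyIntegrable_const M)).mono hV1asm (ae_of_all _ fun x => ?_)
    have h1 : max (V x) 0 + M ≤ |max (V x) 0 + M| := le_abs_self _
    have h2 : max (max (V x) 0) M ≤ max (V x) 0 + M :=
      max_le (le_add_of_nonneg_right hM0.le) (le_add_of_nonneg_left (le_max_right _ _))
    simp only [Real.norm_eq_abs, Pi.add_apply]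
    rw [abs_of_nonneg (hV1nonneg x)]
    exact h2.trans h1
  refine ⟨V1, V2, fun x => by simp [hV2], hV1nonneg, hV1loc, ?_, ?_, ?_⟩
  · -- LocL32 V2
    intro R hR
    haveI : IsFiniteMeasure (volume.restrict (Metric.ball (0 : E3) R)) := by
      constructor
      rw [Measure.restrict_apply_univ]
      exact measure_ball_lt_top
    have hVeq : ∀ x, V2 x = (max (V x) 0 - V1 x) - max (-V x) 0 := by
      intro x
      have := max_zero_sub_max_neg_zero_eq_self (V x)
      simp only [hV2]
      linarith
    have hgasm : AEStronglyMeasurable (fun x => max (V x) 0 - V1 x)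
        (volume.restrict (Metric.ball (0 : E3) R)) :=
      (hVp.aestronglyMeasurable.sub hV1asm).restrict
    have hgbd : ∀ x, ‖max (V x) 0 - V1 x‖ ≤ M := by
      intro x
      rw [Real.norm_eq_abs, abs_sub_comm, abs_of_nonneg (by simp [hV1, le_max_left])]
      have : V1 x ≤ max (V x) 0 + M :=
        max_le (le_add_of_nonneg_right hM0.le) (le_add_of_nonneg_left (le_max_right _ _))
      linarith
    have hg : MemLp (fun x => max (V x) 0 - V1 x) (3 / 2 : ℝ≥0∞)
        (volume.restrict (Metric.ball (0 : E3) R)) :=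
      (memLp_top_of_bound hgasm M (ae_of_all _ hgbd)).mono_exponent le_top
    have hfun : V2 = fun x => (max (V x) 0 - V1 x) - max (-V x) 0 := funext hVeq
    rw [hfun]
    exact hg.sub (hVm R hR)
  · -- V2 → 0 at infinity
    have hev : ∀ᶠ x in cocompact E3, V2 x = 0 := by
      filter_upwards [hVinf.eventually_ge_atTop M] with x hx
      have h1 : max (V x) 0 = V x := max_eq_left (hM0.le.trans hx)
      have h2 : max (V x) M = V x := max_eq_left hx
      simp only [hV2, hV1, h1, h2, sub_self]
    have heq : (fun _ : E3 => (0 : ℝ)) =ᶠ[cocompact E3] V2 := by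
      filter_upwards [hev] with x hx using hx.symm
    exact Tendsto.congr' heq tendsto_const_nhds
  · -- the gap
    have hUV : MemU V u0 := memU_of_bump V hVp u0 h1 hcont hsupp hn
    have hmuVle : muV V ≤ A := muV_le_max V u0 hUV
    have hV1p : LocallyIntegrable (fun x => max (V1 x) 0) volume := by
      have h : (fun x => max (V1 x) 0) = V1 := funext fun x => max_eq_left (hV1nonneg x)
      rw [h]
      exact hV1loc
    have hUV1 : MemU V1 u0 := memU_of_bump V1 hV1p u0 h1 hcont hsupp hn
    have hmuV1ge : M ≤ muV V1 :=
      le_muV V1 M hM0.le hV1geM ⟨qf V1 u0, u0, hUV1, rfl⟩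
    have : C + A ≤ muV V1 := by rw [← hM]; exact hmuV1ge
    linarith [hmuVle, this]
end
end
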